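/- For x ∈ H and v ∈ ℝ², the differential of h(x) = ((4-|x|²)/(|x|²+4x₂+4), 4x₁/(|x|²+4x₂+4)) at x satisfies |Dh_x(v)| = 4|v|/(|x|²+4x₂+4). -/

import Mathlib

noncomputable section

/-- The Euclidean plane. -/
abbrev E2 := EuclideanSpace ℝ (Fin 2)

/-- The open unit disk. -/
def Dset : Set E2 := {x | ‖x‖ < 1}

/-- The upper half plane. -/
def Hset : Set E2 := {x | x 1 > 0}

/-- h(x) = ((4-|x|²)/(|x|²+4x₂+4), 4x₁/(|x|²+4x₂+4)). -/
def hHP (x : E2) : E2 := !₂[(4 - ‖x‖ ^ 2) / (‖x‖ ^ 2 + 4 * x 1 + 4), 4 * x 0 / (‖x‖ ^ 2 + 4 * x 1 + 4)]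

open Complex

/-! `hHP` is the Möbius map `z ↦ (2i - z) / (z + 2i)` from the upper half plane onto the disk, read
in real coordinates. A holomorphic map is conformal: its real differential is multiplication by the
complex derivative `-4i / (z + 2i)²`, which has modulus `4 / |z + 2i|² = 4 / (|x|² + 4x₂ + 4)`. -/

theorem norm_fderiv_conj_apply_of_hasDerivAt {F : Type*} [NormedAddCommGroup F] [NormedSpace ℝ F]
    (φ : ℂ ≃ₗᵢ[ℝ] F) {f : ℂ → ℂ} {f' : ℂ} {x : F} (hf : HasDerivAt f f' (φ.symm x)) (v : F) :
    ‖fderiv ℝ (φ ∘ f ∘ φ.symm) x v‖ = ‖f'‖ * ‖v‖ := by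
  have hφ := φ.toContinuousLinearEquiv.hasFDerivAt (x := f (φ.symm x))
  have hφsymm := φ.symm.toContinuousLinearEquiv.hasFDerivAt (x := x)
  have hconj : HasFDerivAt (φ ∘ f ∘ φ.symm) _ x :=
    hφ.comp x ((hf.hasFDerivAt.restrictScalars ℝ).comp x hφsymm)
  rw [hconj.fderiv]
  simp [mul_comm]

def toE2 : ℂ ≃ₗᵢ[ℝ] E2 := orthonormalBasisOneI.repr

theorem toE2_symm_apply (x : E2) : toE2.symm x = x 0 + x 1 * I :=
  orthonormalBasisOneI_repr_symm_apply x

def mobiusHP (z : ℂ) : ℂ := (2 * I - z) / (z + 2 * I)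

theorem hasDerivAt_mobiusHP {z : ℂ} (hz : z + 2 * I ≠ 0) :
    HasDerivAt mobiusHP (-4 * I / (z + 2 * I) ^ 2) z := by
  have hquot := ((hasDerivAt_id z).const_sub (2 * I)).div ((hasDerivAt_id z).add_const (2 * I)) hz
  exact hquot.congr_deriv (by simp; ring)

theorem normSq_toE2_symm_add_two_I (x : E2) :
    normSq (toE2.symm x + 2 * I) = ‖x‖ ^ 2 + 4 * x 1 + 4 := by
  simp [toE2_symm_apply, normSq_apply, EuclideanSpace.real_norm_sq_eq, Fin.sum_univ_two]; ring

theorem hHP_eq_conj_mobiusHP : hHP = toE2 ∘ mobiusHP ∘ toE2.symm := by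
  ext x i
  fin_cases i <;> simp [hHP, mobiusHP, toE2, orthonormalBasisOneI_repr_apply, div_re, div_im,
    normSq_apply, EuclideanSpace.real_norm_sq_eq, Fin.sum_univ_two] <;> ring

theorem norm_fderiv_hHP (x : E2) (hx : x ∈ Hset) (v : E2) :
    ‖fderiv ℝ hHP x v‖ = 4 * ‖v‖ / (‖x‖ ^ 2 + 4 * x 1 + 4) := by
  have hz : toE2.symm x + 2 * I ≠ 0 := fun h => by
    have him := congrArg im h
    simp [toE2_symm_apply] at him
    linarith [show x 1 > 0 from hx]
  rw [hHP_eq_conj_mobiusHP, norm_fderiv_conj_apply_of_hasDerivAt toE2 (hasDerivAt_mobiusHP hz),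
    norm_div, norm_pow, ← normSq_eq_norm_sq, normSq_toE2_symm_add_two_I]
  norm_num
  ring
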